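/- arXiv:2103.12980 — 2 statements merged into one kernel-verified Lean document; each statement's English description precedes it below -/
import Mathlib

section
/- Let n, k ≥ 1 be arbitrary (no relation between n and k assumed) and let Y and Z be n×k real matrices. Then there exist a k×k real matrix Q with QᵀQ = Iₖ and u ∈ ℝᵏ such that Z = Y·Q + 1ₙ·uᵀ if and only if A_Z = A_Y, where A_Y = Y_norm·Y_normᵀ and Y_norm = (Iₙ − (1/n)·1ₙ·1ₙᵀ)·Y. (Paper's Theorem 2.2: the version of the motion-group characterization valid without the assumption n ≥ k, with s = min(n,k).) -/
/-!
Centering annihilates `1ₙ uᵀ`, so a motion `Y ↦ Y Q + 1ₙ uᵀ` turns `Y_norm` into `Y_norm Q` and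
leaves `A_Y` unchanged when `Q Qᵀ = 1`. Conversely, `A_Z = A_Y` says that the rows of `Z_norm` and
of `Y_norm` have the same Gram matrix. Sending each row of `Y_norm` to the corresponding row of
`Z_norm` is then a well-defined isometry of their span, which extends to an orthogonal
`Q` of `ℝᵏ`; the translation `u` is read off from the column means.
-/

open Matrix

/-- The `n × n` centering matrix `Iₙ − (1/n)·1ₙ·1ₙᵀ`. -/
noncomputable def centerMat (n : ℕ) : Matrix (Fin n) (Fin n) ℝ :=
  1 - Matrix.of (fun _ _ => (n : ℝ)⁻¹)

/-- The centered matrix `Y_norm = (Iₙ − (1/n)·1ₙ·1ₙᵀ)·Y`. -/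
noncomputable def normMat {n k : ℕ} (Y : Matrix (Fin n) (Fin k) ℝ) :
    Matrix (Fin n) (Fin k) ℝ :=
  centerMat n * Y

/-- `A_Y = Y_norm · Y_normᵀ`. -/
noncomputable def AMat {n k : ℕ} (Y : Matrix (Fin n) (Fin k) ℝ) :
    Matrix (Fin n) (Fin n) ℝ :=
  normMat Y * (normMat Y)ᵀ

/-- The matrix `1ₙ · uᵀ` whose every row is `uᵀ`. -/
def transMat {n k : ℕ} (u : Fin k → ℝ) : Matrix (Fin n) (Fin k) ℝ :=
  Matrix.of (fun _ j => u j)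

theorem LinearMap.exists_linearIsometryEquiv_comp_eq {𝕜 V E : Type*} [RCLike 𝕜] [AddCommGroup V]
    [Module 𝕜 V] [NormedAddCommGroup E] [InnerProductSpace 𝕜 E] [FiniteDimensional 𝕜 E]
    (f g : V →ₗ[𝕜] E) (h : ∀ x, ‖g x‖ = ‖f x‖) :
    ∃ M : E ≃ₗᵢ[𝕜] E, ∀ x, M (f x) = g x := by
  have hker : LinearMap.ker f ≤ LinearMap.ker g := fun x hx => by
    rw [LinearMap.mem_ker, ← norm_eq_zero, h, norm_eq_zero]
    exact hx
  -- `f x ↦ g x` is well defined on `range f` and isometric there; extend it to all of `E`.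
  let φ : LinearMap.range f →ₗ[𝕜] E := (LinearMap.ker f).liftQ g hker ∘ₗ f.quotKerEquivRange.symm
  have hφ : ∀ x, φ ⟨f x, LinearMap.mem_range_self f x⟩ = g x := fun x => by
    simp only [φ, LinearMap.comp_apply, LinearEquiv.coe_coe,
      LinearMap.quotKerEquivRange_symm_apply_image]
    exact Submodule.liftQ_apply _ g x
  let L : LinearMap.range f →ₗᵢ[𝕜] E :=
    { toLinearMap := φ
      norm_map' := by
        rintro ⟨_, x, rfl⟩
        rw [Submodule.coe_norm, ← h x, ← hφ x] }
  refine ⟨L.extend.toLinearIsometryEquiv rfl, fun x => ?_⟩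
  rw [LinearIsometry.coe_toLinearIsometryEquiv]
  exact (L.extend_apply ⟨f x, LinearMap.mem_range_self f x⟩).trans (hφ x)

namespace Matrix

variable {𝕜 m n : Type*} [RCLike 𝕜] [Fintype m] [DecidableEq m] [Fintype n] [DecidableEq n]

theorem norm_toEuclideanLin_eq_of_conjTranspose_mul_self_eq {C D : Matrix n m 𝕜}
    (h : Cᴴ * C = Dᴴ * D) (x : EuclideanSpace 𝕜 m) :
    ‖toEuclideanLin C x‖ = ‖toEuclideanLin D x‖ := by
  simp only [norm_eq_sqrt_re_inner (𝕜 := 𝕜), ← LinearMap.adjoint_inner_right,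
    ← toEuclideanLin_conjTranspose_eq_adjoint, ← LinearMap.comp_apply, ← toLpLin_mul, h]

theorem exists_mem_unitaryGroup_mul_eq_of_conjTranspose_mul_self_eq {C D : Matrix n m 𝕜}
    (h : Cᴴ * C = Dᴴ * D) : ∃ U ∈ unitaryGroup n 𝕜, U * D = C := by
  obtain ⟨M, hM⟩ := (toEuclideanLin D).exists_linearIsometryEquiv_comp_eq _
    (norm_toEuclideanLin_eq_of_conjTranspose_mul_self_eq h)
  refine ⟨toEuclideanLin.symm M.toLinearMap, ?_, toEuclideanLin.injective ?_⟩
  · exact M.toMatrix_mem_unitaryGroup (EuclideanSpace.basisFun n 𝕜) (EuclideanSpace.basisFun n 𝕜)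
  · ext1 x
    simp [hM]

end Matrix

theorem Matrix.exists_transpose_mul_self_eq_one_of_mul_transpose_eq {m n : Type*} [Fintype m]
    [DecidableEq m] [Fintype n] [DecidableEq n] {A B : Matrix m n ℝ} (h : A * Aᵀ = B * Bᵀ) :
    ∃ Q : Matrix n n ℝ, Qᵀ * Q = 1 ∧ A = B * Q := by
  obtain ⟨U, hU, hUB⟩ := exists_mem_unitaryGroup_mul_eq_of_conjTranspose_mul_self_eq
    (C := Aᵀ) (D := Bᵀ) (by simpa [conjTranspose_eq_transpose_of_trivial] using h)
  refine ⟨Uᵀ, ?_, ?_⟩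
  · simpa [conjTranspose_eq_transpose_of_trivial, star_eq_conjTranspose] using
      mem_unitaryGroup_iff.mp hU
  · simpa using congrArg transpose hUB.symm

noncomputable def colMean {n k : ℕ} (Y : Matrix (Fin n) (Fin k) ℝ) : Fin k → ℝ :=
  fun j => (n : ℝ)⁻¹ * ∑ i, Y i j

theorem normMat_add_transMat_colMean {n k : ℕ} (Y : Matrix (Fin n) (Fin k) ℝ) :
    normMat Y + transMat (colMean Y) = Y := by
  ext i j
  simp [normMat, centerMat, colMean, transMat, sub_mul, Matrix.mul_apply, Matrix.one_apply,
    Finset.mul_sum]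

theorem centerMat_mul_transMat {n k : ℕ} (hn : n ≠ 0) (u : Fin k → ℝ) :
    centerMat n * (transMat u : Matrix (Fin n) (Fin k) ℝ) = 0 := by
  ext i j
  simp [centerMat, transMat, sub_mul, Matrix.mul_apply, Matrix.one_apply, hn]

theorem transMat_mul {n k l : ℕ} (u : Fin k → ℝ) (Q : Matrix (Fin k) (Fin l) ℝ) :
    (transMat u : Matrix (Fin n) (Fin k) ℝ) * Q = transMat (u ᵥ* Q) := by
  ext i j
  simp [transMat, Matrix.mul_apply, vecMul, dotProduct]

theorem normMat_mul_add_transMat {n k l : ℕ} (hn : n ≠ 0) (Y : Matrix (Fin n) (Fin k) ℝ)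
    (Q : Matrix (Fin k) (Fin l) ℝ) (u : Fin l → ℝ) :
    normMat (Y * Q + transMat u) = normMat Y * Q := by
  rw [normMat, Matrix.mul_add, centerMat_mul_transMat hn, add_zero, normMat, Matrix.mul_assoc]

theorem stmt1_general (n k : ℕ) (hn : 1 ≤ n)
    (Y Z : Matrix (Fin n) (Fin k) ℝ) :
    (∃ Q : Matrix (Fin k) (Fin k) ℝ, ∃ u : Fin k → ℝ,
      Qᵀ * Q = 1 ∧ Z = Y * Q + transMat u) ↔ AMat Z = AMat Y := by
  have hn₀ : n ≠ 0 := Nat.one_le_iff_ne_zero.mp hn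
  constructor
  · rintro ⟨Q, u, hQ, rfl⟩
    have hQ' : Q * Qᵀ = 1 := mul_eq_one_comm.mp hQ
    rw [AMat, AMat, normMat_mul_add_transMat hn₀, transpose_mul, Matrix.mul_assoc,
      ← Matrix.mul_assoc Q, hQ', Matrix.one_mul]
  · intro hA
    obtain ⟨Q, hQ, hZY⟩ := exists_transpose_mul_self_eq_one_of_mul_transpose_eq hA
    refine ⟨Q, colMean Z - colMean Y ᵥ* Q, hQ, ?_⟩
    calc Z = normMat Z + transMat (colMean Z) := (normMat_add_transMat_colMean Z).symm
      _ = (Y - transMat (colMean Y)) * Q + transMat (colMean Z) := by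
        rw [hZY, eq_sub_of_add_eq (normMat_add_transMat_colMean Y)]
      _ = Y * Q + transMat (colMean Z - colMean Y ᵥ* Q) := by
        rw [Matrix.sub_mul, transMat_mul]
        ext i j
        simp only [transMat, Matrix.add_apply, Matrix.sub_apply, of_apply, Pi.sub_apply]
        ring

theorem stmt1 (n k : ℕ) (hn : 1 ≤ n) (hk : 1 ≤ k)
    (Y Z : Matrix (Fin n) (Fin k) ℝ) :
    (∃ Q : Matrix (Fin k) (Fin k) ℝ, ∃ u : Fin k → ℝ,
      Qᵀ * Q = 1 ∧ Z = Y * Q + transMat u) ↔ AMat Z = AMat Y :=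
  stmt1_general n k hn Y Z
end

section
/- Let Y and Z be n×k real matrices with Y_norm ≠ 0 and Z_norm ≠ 0, and let λmax(A) denote the largest eigenvalue of a real symmetric matrix A. Then λmax(A_Y) > 0 and λmax(A_Z) > 0, and Y and Z are similarity-equivalent if and only if (1/λmax(A_Y))·A_Y = (1/λmax(A_Z))·A_Z. (Paper's Theorem 2.3(b)(i),(c): normalizing so the longest principal axis has length 1 gives a complete invariant for similarity equivalence.) -/
open Matrix

/-- The largest eigenvalue of a real (symmetric) matrix, as the supremum of its spectrum. -/
noncomputable def lamMax {n : ℕ} (A : Matrix (Fin n) (Fin n) ℝ) : ℝ :=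
  sSup (spectrum ℝ A)

/-! Right multiplication by an orthogonal matrix `Q` leaves `N Nᵀ` unchanged, and conversely two
matrices `M`, `N` with `M Mᵀ = N Nᵀ` induce maps `x ↦ Mᵀ x`, `x ↦ Nᵀ x` with the same inner
products, so the isometry between their ranges extends to an orthogonal map of `ℝᵏ` carrying one
onto the other. Centering kills exactly the translations `1ₙ uᵀ` and scaling `Y` by `a` scales
`A_Y` by `a²`, so `Y` and `Z` are similarity-equivalent iff `A_Z` is a positive multiple of `A_Y`.
Finally `λmax` is positive on nonzero positive semidefinite matrices and positively homogeneous,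
so dividing by it picks a canonical point on each such ray. -/

theorem LinearMap.exists_linearIsometry_comp_eq {𝕜 V E : Type*} [RCLike 𝕜] [AddCommGroup V]
    [Module 𝕜 V] [NormedAddCommGroup E] [InnerProductSpace 𝕜 E] [FiniteDimensional 𝕜 E]
    (f g : V →ₗ[𝕜] E) (h : ∀ x y, inner 𝕜 (g x) (g y) = inner 𝕜 (f x) (f y)) :
    ∃ Φ : E →ₗᵢ[𝕜] E, Φ.toLinearMap ∘ₗ f = g := by
  have hker : LinearMap.ker f ≤ LinearMap.ker g := fun x hx => by
    rw [LinearMap.mem_ker] at hx ⊢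
    rw [← inner_self_eq_zero (𝕜 := 𝕜), h, hx, inner_zero_left]
  set T : LinearMap.range f →ₗ[𝕜] E :=
    (LinearMap.ker f).liftQ g hker ∘ₗ f.quotKerEquivRange.symm.toLinearMap
  have hT : ∀ x, T ⟨f x, f.mem_range_self x⟩ = g x := fun x => by
    simp [T]
  have hT_inner : ∀ s t, inner 𝕜 (T s) (T t) = inner 𝕜 s t := by
    rintro ⟨_, x, rfl⟩ ⟨_, y, rfl⟩
    rw [hT, hT, h, Submodule.coe_inner]
  refine ⟨(T.isometryOfInner hT_inner).extend, LinearMap.ext fun x => ?_⟩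
  exact ((T.isometryOfInner hT_inner).extend_apply ⟨f x, f.mem_range_self x⟩).trans (hT x)

theorem Matrix.mul_conjTranspose_self_eq_iff {𝕜 m k : Type*} [RCLike 𝕜] [Fintype m]
    [DecidableEq m] [Fintype k] [DecidableEq k] {M N : Matrix m k 𝕜} :
    M * Mᴴ = N * Nᴴ ↔ ∃ Q ∈ unitaryGroup k 𝕜, N = M * Q := by
  constructor
  · intro h
    have hinner (A : Matrix m k 𝕜) x y : inner 𝕜 (toEuclideanLin Aᴴ x) (toEuclideanLin Aᴴ y)
        = inner 𝕜 x (toEuclideanLin (A * Aᴴ) y) := by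
      rw [← LinearMap.adjoint_inner_right, ← toEuclideanLin_conjTranspose_eq_adjoint,
        conjTranspose_conjTranspose, toLpLin_mul_same]
      rfl
    obtain ⟨Φ, hΦ⟩ := LinearMap.exists_linearIsometry_comp_eq (toEuclideanLin Mᴴ)
      (toEuclideanLin Nᴴ) fun x y => by rw [hinner, hinner, h]
    set P := toEuclideanLin.symm Φ.toLinearMap
    have hP : P ∈ unitaryGroup k 𝕜 := by
      rw [mem_unitaryGroup_iff', star_eq_conjTranspose]
      apply toEuclideanLin.injective
      rw [toLpLin_mul_same, toEuclideanLin_conjTranspose_eq_adjoint,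
        LinearEquiv.apply_symm_apply, LinearIsometry.adjoint_comp_self', toLpLin_one]
    refine ⟨Pᴴ, Unitary.star_mem hP, ?_⟩
    have hPM : P * Mᴴ = Nᴴ := by
      apply toEuclideanLin.injective
      rw [toLpLin_mul_same, LinearEquiv.apply_symm_apply, hΦ]
    rw [← conjTranspose_conjTranspose N, ← hPM, conjTranspose_mul, conjTranspose_conjTranspose]
  · rintro ⟨Q, hQ, rfl⟩
    rw [conjTranspose_mul, Matrix.mul_assoc, ← Matrix.mul_assoc Q, ← star_eq_conjTranspose,
      mem_unitaryGroup_iff.mp hQ, Matrix.one_mul]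

theorem Matrix.mul_transpose_self_eq_iff {m k : Type*} [Fintype m] [DecidableEq m] [Fintype k]
    [DecidableEq k] {M N : Matrix m k ℝ} :
    M * Mᵀ = N * Nᵀ ↔ ∃ Q : Matrix k k ℝ, Qᵀ * Q = 1 ∧ N = M * Q := by
  simp only [← conjTranspose_eq_transpose_of_trivial, mul_conjTranspose_self_eq_iff,
    mem_unitaryGroup_iff', star_eq_conjTranspose]

section LamMax

open scoped Pointwise

variable {n : ℕ} {A B : Matrix (Fin n) (Fin n) ℝ}

theorem lamMax_smul {c : ℝ} (hc : 0 < c) : lamMax (c • A) = c * lamMax A := by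
  have hspec : spectrum ℝ (c • A) = c • spectrum ℝ A := by
    simpa using spectrum.unit_smul_eq_smul A (Units.mk0 c hc.ne')
  rw [lamMax, lamMax, hspec, Real.sSup_smul_of_nonneg hc.le, smul_eq_mul]

theorem Matrix.PosSemidef.lamMax_pos (hA : A.PosSemidef) (hA0 : A ≠ 0) : 0 < lamMax A := by
  obtain ⟨i, hi⟩ := Function.ne_iff.mp (mt hA.1.eigenvalues_eq_zero_iff.mp hA0)
  have hspec := hA.1.spectrum_real_eq_range_eigenvalues
  calc 0 < hA.1.eigenvalues i := (hA.eigenvalues_nonneg i).lt_of_ne' hi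
    _ ≤ lamMax A := le_csSup (hspec ▸ (Set.finite_range _).bddAbove) (hspec ▸ ⟨i, rfl⟩)

theorem inv_lamMax_smul_eq_iff (hA : 0 < lamMax A) (hB : 0 < lamMax B) :
    (lamMax A)⁻¹ • A = (lamMax B)⁻¹ • B ↔ ∃ c : ℝ, 0 < c ∧ B = c • A := by
  constructor
  · intro h
    refine ⟨lamMax B / lamMax A, div_pos hB hA, ?_⟩
    rw [div_eq_mul_inv, mul_smul, h, smul_smul, mul_inv_cancel₀ hB.ne', one_smul]
  · rintro ⟨c, hc, rfl⟩
    rw [lamMax_smul hc, smul_smul, _root_.mul_inv_rev, inv_mul_cancel_right₀ hc.ne']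

end LamMax

section Centering

variable {n k : ℕ}

theorem normMat_transMat (u : Fin k → ℝ) :
    normMat (transMat u : Matrix (Fin n) (Fin k) ℝ) = 0 := by
  ext i j
  have hn : (n : ℝ) ≠ 0 := Nat.cast_ne_zero.mpr (Fin.pos i).ne'
  simp [normMat, centerMat, transMat, sub_mul, Matrix.mul_apply, Matrix.one_apply, hn]

theorem sub_normMat (X : Matrix (Fin n) (Fin k) ℝ) :
    X - normMat X = transMat fun j => (n : ℝ)⁻¹ * ∑ i, X i j := by
  ext i j
  simp [normMat, centerMat, transMat, sub_mul, Matrix.mul_apply, Matrix.one_apply,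
    Finset.mul_sum]

theorem normMat_eq_normMat_iff {X W : Matrix (Fin n) (Fin k) ℝ} :
    normMat X = normMat W ↔ ∃ u, X = W + transMat u := by
  constructor
  · intro h
    have h0 : normMat (X - W) = 0 := by
      rw [normMat, Matrix.mul_sub, ← normMat, ← normMat, h, sub_self]
    refine ⟨fun j => (n : ℝ)⁻¹ * ∑ i, (X - W) i j, ?_⟩
    rw [← sub_eq_iff_eq_add', ← sub_normMat, h0, sub_zero]
  · rintro ⟨u, rfl⟩
    rw [normMat, Matrix.mul_add, ← normMat, ← normMat, normMat_transMat, add_zero]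

theorem lamMax_AMat_pos {X : Matrix (Fin n) (Fin k) ℝ} (hX : normMat X ≠ 0) :
    0 < lamMax (AMat X) := by
  rw [AMat, ← conjTranspose_eq_transpose_of_trivial]
  exact (posSemidef_self_mul_conjTranspose _).lamMax_pos
    (self_mul_conjTranspose_eq_zero.not.mpr hX)

end Centering

def SimilarityEquiv {n k : ℕ} (Y Z : Matrix (Fin n) (Fin k) ℝ) : Prop :=
  ∃ a : ℝ, 0 < a ∧ ∃ Q : Matrix (Fin k) (Fin k) ℝ, ∃ u : Fin k → ℝ,
    Qᵀ * Q = 1 ∧ Z = a • (Y * Q) + transMat u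

theorem similarityEquiv_iff_normMat {n k : ℕ} {Y Z : Matrix (Fin n) (Fin k) ℝ} :
    SimilarityEquiv Y Z ↔
      ∃ a : ℝ, 0 < a ∧ ∃ Q : Matrix (Fin k) (Fin k) ℝ,
        Qᵀ * Q = 1 ∧ normMat Z = (a • normMat Y) * Q := by
  have hnorm (a : ℝ) (Q : Matrix (Fin k) (Fin k) ℝ) :
      normMat (a • (Y * Q)) = (a • normMat Y) * Q := by
    rw [normMat, normMat, Matrix.mul_smul, Matrix.smul_mul, Matrix.mul_assoc]
  simp only [SimilarityEquiv, ← hnorm, normMat_eq_normMat_iff, exists_and_left]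

theorem similarityEquiv_iff_AMat {n k : ℕ} {Y Z : Matrix (Fin n) (Fin k) ℝ} :
    SimilarityEquiv Y Z ↔ ∃ c : ℝ, 0 < c ∧ AMat Z = c • AMat Y := by
  have hAMat (a : ℝ) : (a • normMat Y) * (a • normMat Y)ᵀ = (a * a) • AMat Y := by
    rw [transpose_smul, Matrix.smul_mul, Matrix.mul_smul, smul_smul, AMat]
  simp only [similarityEquiv_iff_normMat, ← Matrix.mul_transpose_self_eq_iff, hAMat, AMat]
  constructor
  · rintro ⟨a, ha, h⟩
    exact ⟨a * a, mul_pos ha ha, h.symm⟩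
  · rintro ⟨c, hc, h⟩
    refine ⟨√c, Real.sqrt_pos.mpr hc, ?_⟩
    rw [Real.mul_self_sqrt hc.le, h]

theorem stmt9 (n k : ℕ) (Y Z : Matrix (Fin n) (Fin k) ℝ)
    (hY : normMat Y ≠ 0) (hZ : normMat Z ≠ 0) :
    0 < lamMax (AMat Y) ∧ 0 < lamMax (AMat Z) ∧
    ((∃ a : ℝ, 0 < a ∧ ∃ Q : Matrix (Fin k) (Fin k) ℝ, ∃ u : Fin k → ℝ,
        Qᵀ * Q = 1 ∧ Z = a • (Y * Q) + transMat u) ↔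
      (lamMax (AMat Y))⁻¹ • AMat Y = (lamMax (AMat Z))⁻¹ • AMat Z) :=
  ⟨lamMax_AMat_pos hY, lamMax_AMat_pos hZ,
    similarityEquiv_iff_AMat.trans
      (inv_lamMax_smul_eq_iff (lamMax_AMat_pos hY) (lamMax_AMat_pos hZ)).symm⟩
end
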